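/- Let F be a field, N a natural number, V an (N+1)-dimensional vector space over F, and B a Billiard Array on V. Let λ, μ, ν be locations in Δ_N that form a white 3-clique. Then the sum B_λ + B_μ + B_ν is direct, i.e., the three one-dimensional subspaces B_λ, B_μ, B_ν are independent. -/

import Mathlib

/-- `Δ_N`: the set of triples of natural numbers with sum `N`. -/
def BA.Delta (N : ℕ) : Set (Fin 3 → ℕ) := {v | v 0 + v 1 + v 2 = N}

/-- A line in `Δ_N`: the set of locations with a given `η`-coordinate `c`. -/
def BA.IsLine (N : ℕ) (L : Set (Fin 3 → ℕ)) : Prop :=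
  ∃ (η : Fin 3) (c : ℕ), c ≤ N ∧ L = {v ∈ BA.Delta N | v η = c}

/-- The black 3-clique attached to `(r,s,t)`. -/
def BA.blackSet (r s t : ℕ) : Set (Fin 3 → ℕ) :=
  {![r + 1, s, t], ![r, s + 1, t], ![r, s, t + 1]}

/-- A Billiard Array on `V`: a function assigning to each location of `Δ_N` a
one-dimensional subspace of `V`, such that the sum over each line is direct and
the sum over each black 3-clique is not direct. -/
def BA.IsBilliardArray {F V : Type*} [Field F] [AddCommGroup V] [Module F V]
    (N : ℕ) (B : (Fin 3 → ℕ) → Submodule F V) : Prop :=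
  (∀ v ∈ BA.Delta N, Module.finrank F (B v) = 1) ∧
  (∀ L : Set (Fin 3 → ℕ), BA.IsLine N L → iSupIndep fun x : L => B x.1) ∧
  (∀ r s t : ℕ, r + s + t + 1 = N → ¬ iSupIndep fun x : BA.blackSet r s t => B x.1)

/-- The white 3-clique attached to `(r,s,t)`. -/
def BA.whiteSet (r s t : ℕ) : Set (Fin 3 → ℕ) :=
  {![r, s + 1, t + 1], ![r + 1, s, t + 1], ![r + 1, s + 1, t]}

/-! Write a = (r,s+1,t+1), b = (r+1,s,t+1), c = (r+1,s+1,t). If B_a + B_b + B_c were not direct,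
then B_c would lie in the plane W = B_a + B_b. The black 3-cliques at (r,s,t+1) and (r,s+1,t)
then force B at p = (r,s,t+2) and at q = (r,s+2,t) into W as well. But a, q, p lie on the 1-line
with coordinate r, so B_a, B_q, B_p are three independent lines in the plane W, which is absurd.
The argument runs in the modular lattice of subspaces, whose atoms are the one-dimensional
subspaces. -/

section Lattice

variable {α : Type*}

theorem sup_eq_sup_of_le_sup [Lattice α] [OrderBot α] [IsModularLattice α] {a b q : α}
    (hb : IsAtom b) (hqa : ¬ q ≤ a) (hq : q ≤ a ⊔ b) : a ⊔ q = a ⊔ b := by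
  have hba : ¬ b ≤ a := fun h => hqa (by rwa [sup_eq_left.mpr h] at hq)
  have hcov : a ⋖ a ⊔ b := covBy_sup_of_inf_covBy_right <| by
    rw [(hb.not_le_iff_disjoint.mp hba).symm.eq_bot]
    exact hb.bot_covBy
  exact (hcov.eq_or_eq le_sup_left (sup_le le_sup_left hq)).resolve_left
    fun h => hqa (h ▸ le_sup_right)

variable [CompleteLattice α]

theorem iSupIndep_fin_three_of_disjoint_sup [IsModularLattice α] {a b c : α}
    (hab : Disjoint a b) (hc : Disjoint (a ⊔ b) c) : iSupIndep ![a, b, c] := by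
  refine iSupIndep_fin_three.mpr ⟨hab.disjoint_sup_right_of_disjoint_sup_left hc, ?_, ?_⟩
  · simpa [sup_comm] using hab.symm.disjoint_sup_right_of_disjoint_sup_left (sup_comm a b ▸ hc)
  · simpa using hc.symm

theorem le_sup_of_not_iSupIndep [IsModularLattice α] {a b c : α} (hc : IsAtom c)
    (hab : Disjoint a b) (h : ¬ iSupIndep ![a, b, c]) : c ≤ a ⊔ b := by
  by_contra hcab
  exact h (iSupIndep_fin_three_of_disjoint_sup hab (hc.not_le_iff_disjoint.mp hcab).symm)

theorem not_iSupIndep_of_le_sup [IsModularLattice α] {a b p q : α} (hb : IsAtom b)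
    (hq0 : q ≠ ⊥) (hp0 : p ≠ ⊥) (hq : q ≤ a ⊔ b) (hp : p ≤ a ⊔ b) :
    ¬ iSupIndep ![a, q, p] := by
  intro h
  obtain ⟨-, hq_disj, hp_disj⟩ := iSupIndep_fin_three.mp h
  have hqa : ¬ q ≤ a := fun hqa => hq0 (hq_disj.eq_bot_of_le (hqa.trans le_sup_right))
  have hpa : p ≤ a ⊔ q := sup_eq_sup_of_le_sup hb hqa hq ▸ hp
  exact hp0 (hp_disj.eq_bot_of_le (by simpa using hpa))

variable {ι : Type*} {f : ι → α} {x y z : ι}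

theorem iSupIndep.fin_three_of_subtype {s : Set ι} (h : iSupIndep fun i : s => f i)
    (hx : x ∈ s) (hy : y ∈ s) (hz : z ∈ s) (hxy : x ≠ y) (hxz : x ≠ z) (hyz : y ≠ z) :
    iSupIndep ![f x, f y, f z] := by
  have hinj : Function.Injective (![⟨x, hx⟩, ⟨y, hy⟩, ⟨z, hz⟩] : Fin 3 → s) := by
    intro i j
    fin_cases i <;> fin_cases j <;>
      simp [Subtype.ext_iff, hxy, hxz, hyz, hxy.symm, hxz.symm, hyz.symm]
  convert h.comp hinj using 1
  ext i
  fin_cases i <;> rfl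

theorem iSupIndep.subtype_of_fin_three (h : iSupIndep ![f x, f y, f z]) :
    iSupIndep fun i : ({x, y, z} : Set ι) => f i := by
  let g : Fin 3 → ({x, y, z} : Set ι) := ![⟨x, by simp⟩, ⟨y, by simp⟩, ⟨z, by simp⟩]
  have hsurj : Function.Surjective g := by
    rintro ⟨i, rfl | rfl | rfl⟩
    exacts [⟨0, rfl⟩, ⟨1, rfl⟩, ⟨2, rfl⟩]
  refine iSupIndep.comp' ?_ hsurj
  convert h using 1
  ext i
  fin_cases i <;> rfl

end Lattice

theorem Set.pairwise_ne_of_insert_insert_eq {ι : Type*} {a b c x y z : ι}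
    (h : ({x, y, z} : Set ι) = {a, b, c}) (hab : a ≠ b) (hac : a ≠ c) (hbc : b ≠ c) :
    x ≠ y ∧ x ≠ z ∧ y ≠ z := by
  have h3 : ({x, y, z} : Set ι).ncard = 3 :=
    h ▸ Set.ncard_eq_three.mpr ⟨a, b, c, hab, hac, hbc, rfl⟩
  refine ⟨?_, ?_, ?_⟩ <;> rintro rfl <;>
    simp only [mem_insert_iff, mem_singleton_iff, true_or, or_true, insert_eq_of_mem] at h3 <;>
    grind [Set.ncard_insert_le, Set.ncard_singleton]

namespace BA

@[simp]
theorem mem_Delta_vec {N a b c : ℕ} : ![a, b, c] ∈ Delta N ↔ a + b + c = N := Iff.rfl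

theorem apply_le_of_mem_Delta {N : ℕ} {x : Fin 3 → ℕ} (hx : x ∈ Delta N) (η : Fin 3) :
    x η ≤ N := by
  have hx : x 0 + x 1 + x 2 = N := hx
  fin_cases η <;> dsimp <;> omega

namespace IsBilliardArray

variable {F V : Type*} [Field F] [AddCommGroup V] [Module F V] {N : ℕ}
  {B : (Fin 3 → ℕ) → Submodule F V}

theorem isAtom (hB : IsBilliardArray N B) {x : Fin 3 → ℕ} (hx : x ∈ Delta N) : IsAtom (B x) :=
  Submodule.isAtom_iff_finrank_eq_one.mpr (hB.1 x hx)

theorem iSupIndep_line (hB : IsBilliardArray N B) (η : Fin 3) {c : ℕ} (hc : c ≤ N) :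
    iSupIndep fun x : {v ∈ Delta N | v η = c} => B x :=
  hB.2.1 _ ⟨η, c, hc, rfl⟩

variable {x y z : Fin 3 → ℕ}

theorem disjoint_of_apply_eq (hB : IsBilliardArray N B) (η : Fin 3) (hx : x ∈ Delta N)
    (hy : y ∈ Delta N) (hxy : x ≠ y) (h : x η = y η) : Disjoint (B x) (B y) :=
  (hB.iSupIndep_line η (apply_le_of_mem_Delta hy η)).pairwiseDisjoint
    (show (⟨x, hx, h⟩ : {v ∈ Delta N | v η = y η}) ≠ ⟨y, hy, rfl⟩ from
      fun e => hxy (congrArg Subtype.val e))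

theorem iSupIndep_of_apply_eq (hB : IsBilliardArray N B) (η : Fin 3) (hx : x ∈ Delta N)
    (hy : y ∈ Delta N) (hz : z ∈ Delta N) (hxy : x ≠ y) (hxz : x ≠ z) (hyz : y ≠ z)
    (hxη : x η = z η) (hyη : y η = z η) : iSupIndep ![B x, B y, B z] :=
  (hB.iSupIndep_line η (apply_le_of_mem_Delta hz η)).fin_three_of_subtype
    ⟨hx, hxη⟩ ⟨hy, hyη⟩ ⟨hz, rfl⟩ hxy hxz hyz

theorem le_sup_of_black (hB : IsBilliardArray N B) {r s t : ℕ} (hN : r + s + t + 1 = N) :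
    B ![r, s, t + 1] ≤ B ![r + 1, s, t] ⊔ B ![r, s + 1, t] :=
  le_sup_of_not_iSupIndep (hB.isAtom (mem_Delta_vec.mpr (by omega)))
    (hB.disjoint_of_apply_eq 2 (mem_Delta_vec.mpr (by omega)) (mem_Delta_vec.mpr (by omega))
      (by simp) rfl)
    fun h => hB.2.2 r s t hN h.subtype_of_fin_three

theorem iSupIndep_white (hB : IsBilliardArray N B) {r s t : ℕ} (hN : r + s + t + 2 = N) :
    iSupIndep ![B ![r, s + 1, t + 1], B ![r + 1, s, t + 1], B ![r + 1, s + 1, t]] := by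
  have ha : ![r, s + 1, t + 1] ∈ Delta N := mem_Delta_vec.mpr (by omega)
  have hb : ![r + 1, s, t + 1] ∈ Delta N := mem_Delta_vec.mpr (by omega)
  have hc : ![r + 1, s + 1, t] ∈ Delta N := mem_Delta_vec.mpr (by omega)
  have hp : ![r, s, t + 2] ∈ Delta N := mem_Delta_vec.mpr (by omega)
  have hq : ![r, s + 2, t] ∈ Delta N := mem_Delta_vec.mpr (by omega)
  have hab := hB.disjoint_of_apply_eq 2 ha hb (by simp) rfl
  have hac := hB.disjoint_of_apply_eq 1 ha hc (by simp) rfl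
  by_contra hdep
  have hc_le : B ![r + 1, s + 1, t] ≤ B ![r, s + 1, t + 1] ⊔ B ![r + 1, s, t + 1] :=
    le_sup_of_not_iSupIndep (hB.isAtom hc) hab hdep
  have hp_le : B ![r, s, t + 2] ≤ B ![r + 1, s, t + 1] ⊔ B ![r, s + 1, t + 1] :=
    hB.le_sup_of_black (t := t + 1) (by omega)
  have hq_le : B ![r, s + 2, t] ≤ B ![r, s + 1, t + 1] ⊔ B ![r + 1, s, t + 1] :=
    calc B ![r, s + 2, t] ≤ B ![r + 1, s + 1, t] ⊔ B ![r, s + 1, t + 1] :=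
          le_sup_right.trans (sup_eq_sup_of_le_sup (hB.isAtom hq)
            ((hB.isAtom ha).not_le_iff_disjoint.mpr hac)
            (hB.le_sup_of_black (s := s + 1) (by omega))).ge
      _ ≤ _ := sup_le hc_le le_sup_left
  exact not_iSupIndep_of_le_sup (hB.isAtom hb) (hB.isAtom hq).1 (hB.isAtom hp).1 hq_le
    (sup_comm (B ![r + 1, s, t + 1]) _ ▸ hp_le)
    (hB.iSupIndep_of_apply_eq 0 ha hq hp (by simp) (by simp) (by simp) rfl rfl)

end IsBilliardArray

end BA

theorem stmt17_general {F V : Type*} [Field F] [AddCommGroup V] [Module F V] (N : ℕ)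
    (B : (Fin 3 → ℕ) → Submodule F V)
    (hB : BA.IsBilliardArray N B)
    (l m n : Fin 3 → ℕ)
    (hw : ∃ r s t : ℕ, r + s + t + 2 = N ∧
      ({l, m, n} : Set (Fin 3 → ℕ)) = BA.whiteSet r s t) :
    iSupIndep ![B l, B m, B n] := by
  obtain ⟨r, s, t, hN, hlmn⟩ := hw
  obtain ⟨hlm, hln, hmn⟩ :=
    Set.pairwise_ne_of_insert_insert_eq hlmn (by simp) (by simp) (by simp)
  have hwhite : iSupIndep fun x : ({l, m, n} : Set (Fin 3 → ℕ)) => B x := by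
    rw [hlmn]
    exact (hB.iSupIndep_white hN).subtype_of_fin_three
  exact hwhite.fin_three_of_subtype (by simp) (by simp) (by simp) hlm hln hmn

/-- For a Billiard Array `B` on `V` and locations `λ, μ, ν` forming a white
3-clique in `Δ_N`, the sum `B_λ + B_μ + B_ν` is direct. -/
theorem stmt17 {F V : Type*} [Field F] [AddCommGroup V] [Module F V] (N : ℕ)
    (hV : Module.finrank F V = N + 1) (B : (Fin 3 → ℕ) → Submodule F V)
    (hB : BA.IsBilliardArray N B)
    (l m n : Fin 3 → ℕ)
    (hw : ∃ r s t : ℕ, r + s + t + 2 = N ∧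
      ({l, m, n} : Set (Fin 3 → ℕ)) = BA.whiteSet r s t) :
    iSupIndep ![B l, B m, B n] :=
  stmt17_general N B hB l m n hw
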